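/- arXiv:1001.3129 — 6 statements merged into one kernel-verified Lean document; each statement's English description precedes it below -/
import Mathlib

section
/- For all bounded functions u : H → ℝ on a Hilbert space H and all s, t ≥ 0, the inf-convolution operators satisfy the semigroup property T_t (T_s u) = T_{t+s} u, where T_t u(x) = inf_y (u(y) + ‖y - x‖²/t) for t > 0 and T_0 u = u. -/
/-!
`T_t (T_s u) x` is the infimum over pairs `(y, z)` of `u z + ‖z - y‖² / s + ‖y - x‖² / t`, so it
suffices to minimise the cost of going from `z` to `x` through `y`. By the triangle inequality and
Cauchy–Schwarz in the form `(a + b)² / (s + t) ≤ a² / s + b² / t` this cost is at least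
`‖z - x‖² / (s + t)`, with equality at the point `y` dividing the segment `[x, z]` in the ratio
`t : s`.
-/

noncomputable def infConv {H : Type*} [NormedAddCommGroup H] [InnerProductSpace ℝ H]
    (t : ℝ) (u : H → ℝ) (x : H) : ℝ :=
  if t = 0 then u x else ⨅ y : H, (u y + ‖y - x‖ ^ 2 / t)

open Set AffineMap

lemma add_sq_div_add_le (a b : ℝ) {s t : ℝ} (hs : 0 < s) (ht : 0 < t) :
    (a + b) ^ 2 / (s + t) ≤ a ^ 2 / s + b ^ 2 / t := by
  rw [div_add_div _ _ hs.ne' ht.ne', div_le_div_iff₀ (by positivity) (by positivity)]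
  nlinarith [sq_nonneg (a * t - b * s), mul_pos hs ht]

section QuadraticCost

variable {E : Type*} [SeminormedAddCommGroup E] {s t : ℝ}

lemma norm_sub_sq_div_add_le (x y z : E) (hs : 0 < s) (ht : 0 < t) :
    ‖z - x‖ ^ 2 / (s + t) ≤ ‖z - y‖ ^ 2 / s + ‖y - x‖ ^ 2 / t :=
  calc ‖z - x‖ ^ 2 / (s + t) ≤ (‖z - y‖ + ‖y - x‖) ^ 2 / (s + t) := by
        gcongr; exact norm_sub_le_norm_sub_add_norm_sub z y x
    _ ≤ ‖z - y‖ ^ 2 / s + ‖y - x‖ ^ 2 / t := add_sq_div_add_le _ _ hs ht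

lemma norm_sub_lineMap_sq_div_add [NormedSpace ℝ E] (x z : E) (hs : 0 < s) (ht : 0 < t) :
    ‖z - lineMap x z (t / (s + t))‖ ^ 2 / s + ‖lineMap x z (t / (s + t)) - x‖ ^ 2 / t =
      ‖z - x‖ ^ 2 / (s + t) := by
  have hst : s + t ≠ 0 := by positivity
  have h1 : 1 - t / (s + t) = s / (s + t) := by field_simp; ring
  rw [← vsub_eq_sub, ← vsub_eq_sub (lineMap x z _), right_vsub_lineMap, lineMap_vsub_left, h1,
    vsub_eq_sub, norm_smul, norm_smul, Real.norm_of_nonneg (by positivity),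
    Real.norm_of_nonneg (by positivity)]
  field_simp

lemma bddBelow_range_add_sq_div {u : E → ℝ} (hu : BddBelow (range u)) (ht : 0 ≤ t) (x : E) :
    BddBelow (range fun y => u y + ‖y - x‖ ^ 2 / t) := by
  obtain ⟨m, hm⟩ := hu
  refine ⟨m, forall_mem_range.2 fun y => ?_⟩
  have : 0 ≤ ‖y - x‖ ^ 2 / t := by positivity
  linarith [hm (mem_range_self y)]

end QuadraticCost

section InfConv

variable {H : Type*} [NormedAddCommGroup H] [InnerProductSpace ℝ H] {u : H → ℝ} {s t : ℝ}

@[simp]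
lemma infConv_zero (u : H → ℝ) : infConv 0 u = u := by
  funext x; simp [infConv]

lemma infConv_of_ne_zero (ht : t ≠ 0) (u : H → ℝ) (x : H) :
    infConv t u x = ⨅ y, u y + ‖y - x‖ ^ 2 / t := if_neg ht

lemma infConv_le (hu : BddBelow (range u)) (ht : 0 < t) (y x : H) :
    infConv t u x ≤ u y + ‖y - x‖ ^ 2 / t := by
  rw [infConv_of_ne_zero ht.ne']
  exact ciInf_le (bddBelow_range_add_sq_div hu ht.le x) y

lemma le_infConv {a : ℝ} {x : H} (ht : 0 < t) (h : ∀ y, a ≤ u y + ‖y - x‖ ^ 2 / t) :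
    a ≤ infConv t u x := by
  rw [infConv_of_ne_zero ht.ne']
  exact le_ciInf h

lemma bddBelow_range_infConv (hu : BddBelow (range u)) (ht : 0 ≤ t) :
    BddBelow (range (infConv t u)) := by
  rcases ht.eq_or_lt with rfl | ht
  · simpa using hu
  obtain ⟨m, hm⟩ := hu
  refine ⟨m, forall_mem_range.2 fun x => le_infConv ht fun y => ?_⟩
  have : 0 ≤ ‖y - x‖ ^ 2 / t := by positivity
  linarith [hm (mem_range_self y)]

lemma infConv_infConv_le (hu : BddBelow (range u)) (hs : 0 < s) (ht : 0 < t) (x : H) :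
    infConv t (infConv s u) x ≤ infConv (s + t) u x := by
  refine le_infConv (by positivity) fun z => ?_
  set y := lineMap x z (t / (s + t))
  calc infConv t (infConv s u) x ≤ infConv s u y + ‖y - x‖ ^ 2 / t :=
        infConv_le (bddBelow_range_infConv hu hs.le) ht y x
    _ ≤ u z + ‖z - y‖ ^ 2 / s + ‖y - x‖ ^ 2 / t := by
        gcongr; exact infConv_le hu hs z y
    _ = u z + ‖z - x‖ ^ 2 / (s + t) := by
        rw [add_assoc, norm_sub_lineMap_sq_div_add x z hs ht]

lemma infConv_le_infConv_infConv (hu : BddBelow (range u)) (hs : 0 < s) (ht : 0 < t) (x : H) :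
    infConv (s + t) u x ≤ infConv t (infConv s u) x := by
  refine le_infConv ht fun y => sub_le_iff_le_add.1 <| le_infConv hs fun z => ?_
  linarith [infConv_le hu (add_pos hs ht) z x, norm_sub_sq_div_add_le x y z hs ht]

end InfConv

theorem infConv_semigroup {H : Type*} [NormedAddCommGroup H] [InnerProductSpace ℝ H]
    (u : H → ℝ) (hu : ∃ C : ℝ, ∀ x, |u x| ≤ C)
    (s t : ℝ) (hs : 0 ≤ s) (ht : 0 ≤ t) :
    infConv t (infConv s u) = infConv (t + s) u := by
  obtain ⟨C, hC⟩ := hu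
  have hbdd : BddBelow (range u) :=
    ⟨-C, forall_mem_range.2 fun x => (abs_le.1 (hC x)).1⟩
  rcases hs.eq_or_lt with rfl | hs
  · rw [infConv_zero, add_zero]
  rcases ht.eq_or_lt with rfl | ht
  · rw [infConv_zero, zero_add]
  funext x
  rw [add_comm]
  exact (infConv_infConv_le hbdd hs ht x).antisymm (infConv_le_infConv_infConv hbdd hs ht x)
end

section
/- If u : H → ℝ is bounded and k-semi-concave, then for every 0 < t < k the function Ť_t u is (k - t)-semi-concave. -/
/-!
Completing the square gives
`‖y - x‖² / t + ‖x‖² / (k - t) = ‖y‖² / k + ‖(k - t) • y - k • x‖² / (k t (k - t))`,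
so for `0 < t < k` the function `(x, y) ↦ u y - ‖y - x‖² / t - ‖x‖² / (k - t)` is the
concave function `u y - ‖y‖² / k` minus a convex quadratic form, hence jointly concave.
Taking the supremum over `y` of a jointly concave function preserves concavity in `x`.
-/

noncomputable def supConv {H : Type*} [NormedAddCommGroup H] [InnerProductSpace ℝ H]
    (t : ℝ) (u : H → ℝ) (x : H) : ℝ :=
  if t = 0 then u x else ⨆ y : H, (u y - ‖y - x‖ ^ 2 / t)

open Set

theorem ciSup_sub_const {α : Type*} [ConditionallyCompleteLattice α] [AddGroup α] [AddRightMono α]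
    {ι : Sort*} [Nonempty ι] {f : ι → α} (hf : BddAbove (range f)) (c : α) :
    (⨆ i, f i) - c = ⨆ i, (f i - c) := by
  simpa [sub_eq_add_neg] using (OrderIso.addRight (-c)).map_ciSup hf

theorem concaveOn_ciSup_of_concaveOn_prod {E F : Type*} [AddCommMonoid E] [Module ℝ E]
    [AddCommMonoid F] [Module ℝ F] [Nonempty F] {s : Set E} {f : E → F → ℝ}
    (hf : ConcaveOn ℝ (s ×ˢ univ) fun p : E × F => f p.1 p.2)
    (hbdd : ∀ x ∈ s, BddAbove (range (f x))) :
    ConcaveOn ℝ s fun x => ⨆ y, f x y := by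
  have hs : Convex ℝ s := fun x₁ hx₁ x₂ hx₂ a b ha hb hab =>
    (hf.1 (mk_mem_prod hx₁ (mem_univ (0 : F))) (mk_mem_prod hx₂ (mem_univ 0)) ha hb hab).1
  refine ⟨hs, fun x₁ hx₁ x₂ hx₂ a b ha hb hab => ?_⟩
  rw [smul_eq_mul, smul_eq_mul, Real.mul_iSup_of_nonneg ha, Real.mul_iSup_of_nonneg hb]
  refine ciSup_add_ciSup_le fun y₁ y₂ => ?_
  calc a * f x₁ y₁ + b * f x₂ y₂ ≤ f (a • x₁ + b • x₂) (a • y₁ + b • y₂) := by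
        simpa using hf.2 (mk_mem_prod hx₁ (mem_univ y₁)) (mk_mem_prod hx₂ (mem_univ y₂)) ha hb hab
    _ ≤ ⨆ y, f (a • x₁ + b • x₂) y := le_ciSup (hbdd _ (hs hx₁ hx₂ ha hb hab)) _

section InnerProductSpace

variable {H : Type*} [NormedAddCommGroup H] [InnerProductSpace ℝ H]

theorem norm_sub_sq_div_add_norm_sq_div {t k : ℝ} (ht : t ≠ 0) (hk : k ≠ 0) (hkt : k - t ≠ 0)
    (x y : H) :
    ‖y - x‖ ^ 2 / t + ‖x‖ ^ 2 / (k - t)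
      = ‖y‖ ^ 2 / k + ‖(k - t) • y - k • x‖ ^ 2 / (k * t * (k - t)) := by
  rw [norm_sub_sq_real, norm_sub_sq_real, real_inner_smul_left, real_inner_smul_right,
    norm_smul, norm_smul, mul_pow, mul_pow, Real.norm_eq_abs, Real.norm_eq_abs, sq_abs, sq_abs]
  field_simp
  ring

theorem convexOn_univ_norm_sq : ConvexOn ℝ univ fun x : H => ‖x‖ ^ 2 :=
  convexOn_univ_norm.pow (fun _ _ => norm_nonneg _) 2

theorem ConcaveOn.prod_sub_norm_sub_sq_div {u : H → ℝ} {k t : ℝ}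
    (hu : ConcaveOn ℝ univ fun x => u x - ‖x‖ ^ 2 / k) (ht : 0 < t) (htk : t < k) :
    ConcaveOn ℝ univ fun p : H × H => u p.2 - ‖p.2 - p.1‖ ^ 2 / t - ‖p.1‖ ^ 2 / (k - t) := by
  have hkt : 0 < k - t := sub_pos.mpr htk
  have hk : 0 < k := ht.trans htk
  have hquad : ConvexOn ℝ univ fun p : H × H =>
      (k * t * (k - t))⁻¹ * ‖(k - t) • p.2 - k • p.1‖ ^ 2 := by
    simpa using (convexOn_univ_norm_sq.comp_linearMap
      ((k - t) • LinearMap.snd ℝ H H - k • LinearMap.fst ℝ H H)).smul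
      (c := (k * t * (k - t))⁻¹) (by positivity)
  have hsnd : ConcaveOn ℝ univ fun p : H × H => u p.2 - ‖p.2‖ ^ 2 / k :=
    hu.comp_linearMap (LinearMap.snd ℝ H H)
  refine (hsnd.sub hquad).congr fun p _ => ?_
  have hsquare := norm_sub_sq_div_add_norm_sq_div ht.ne' hk.ne' hkt.ne' p.1 p.2
  simp only [Pi.sub_apply, ← div_eq_inv_mul]
  linarith

end InnerProductSpace

theorem supConv_semiconcave {H : Type*} [NormedAddCommGroup H] [InnerProductSpace ℝ H]
    (u : H → ℝ) (hu : ∃ C : ℝ, ∀ x, |u x| ≤ C) (k : ℝ)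
    (hk : ConcaveOn ℝ Set.univ (fun x : H => u x - ‖x‖ ^ 2 / k))
    (t : ℝ) (ht : 0 < t) (htk : t < k) :
    ConcaveOn ℝ Set.univ (fun x : H => supConv t u x - ‖x‖ ^ 2 / (k - t)) := by
  obtain ⟨C, hC⟩ := hu
  have hbdd (x : H) : BddAbove (range fun y => u y - ‖y - x‖ ^ 2 / t) := by
    refine ⟨C, forall_mem_range.mpr fun y => ?_⟩
    have hpenalty := div_nonneg (sq_nonneg ‖y - x‖) ht.le
    linarith [(abs_le.mp (hC y)).2]
  have hsup := concaveOn_ciSup_of_concaveOn_prod (s := univ)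
    (f := fun x y => u y - ‖y - x‖ ^ 2 / t - ‖x‖ ^ 2 / (k - t))
    (by simpa using hk.prod_sub_norm_sub_sq_div ht htk)
    fun x _ => (hbdd x).range_comp_left fun _ _ h => sub_le_sub_right h _
  refine hsup.congr fun x _ => ?_
  rw [supConv, if_neg ht.ne', ciSup_sub_const (hbdd x)]
end

section
/- If u : H → ℝ is bounded and ρ-continuous for a modulus of continuity ρ, then T_t u is ρ-continuous for every t > 0; that is, |T_t u(y) - T_t u(x)| ≤ ρ(‖y - x‖) for all x, y. -/
theorem infConv_rho_continuous {H : Type*} [NormedAddCommGroup H] [InnerProductSpace ℝ H]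
    (ρ : ℝ → ℝ)
    (hρ_mono : ∀ r r' : ℝ, 0 ≤ r → r ≤ r' → ρ r ≤ ρ r')
    (hρ_nonneg : ∀ r : ℝ, 0 ≤ r → 0 ≤ ρ r)
    (hρ_subadd : ∀ r r' : ℝ, 0 ≤ r → 0 ≤ r' → ρ (r + r') ≤ ρ r + ρ r')
    (hρ_lim : Filter.Tendsto ρ (nhdsWithin 0 (Set.Ioi 0)) (nhds 0))
    (u : H → ℝ) (hu : ∃ C : ℝ, ∀ x, |u x| ≤ C)
    (hu_cont : ∀ x y : H, |u y - u x| ≤ ρ ‖y - x‖)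
    (t : ℝ) (ht : 0 < t) :
    ∀ x y : H, |infConv t u y - infConv t u x| ≤ ρ ‖y - x‖ := by
  obtain ⟨C, hC⟩ := hu
  have hbdd : ∀ x : H, BddBelow (Set.range fun z : H => u z + ‖z - x‖ ^ 2 / t) := by
    intro x
    refine ⟨-C, ?_⟩
    rintro r ⟨z, rfl⟩
    have h1 : -C ≤ u z := neg_le_of_abs_le (hC z)
    have h2 : 0 ≤ ‖z - x‖ ^ 2 / t := div_nonneg (by positivity) ht.le
    linarith
  have key : ∀ x y : H, infConv t u y ≤ infConv t u x + ρ ‖y - x‖ := by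
    intro x y
    simp only [infConv, if_neg ht.ne']
    rw [← sub_le_iff_le_add]
    refine le_ciInf fun z => ?_
    rw [sub_le_iff_le_add]
    have h1 : (⨅ w : H, (u w + ‖w - y‖ ^ 2 / t)) ≤ u (z + (y - x)) + ‖z + (y - x) - y‖ ^ 2 / t :=
      ciInf_le (hbdd y) (z + (y - x))
    have h2 : z + (y - x) - y = z - x := by abel
    have h3 : u (z + (y - x)) - u z ≤ ρ ‖y - x‖ := by
      have := hu_cont z (z + (y - x))
      have h4 : z + (y - x) - z = y - x := by abel
      rw [h4] at this
      exact (abs_le.mp this).2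
    rw [h2] at h1
    linarith
  intro x y
  rw [abs_sub_le_iff]
  constructor
  · have := key x y
    linarith
  · have := key y x
    rw [norm_sub_rev] at this
    linarith
end

section
/- Let u : H → ℝ be continuous, both k-semi-concave and k-semi-convex for some k > 0. Then u is Fréchet differentiable on H, its gradient map x ↦ ∇u(x) is Lipschitz with constant 6/k, and for each x there is a unique l_x ∈ H with |u(x+y) - u(x) - ⟪l_x, y⟫| ≤ ‖y‖²/k for all y. -/
open scoped RealInnerProductSpace

/-!
With `c = 1/k`, adding `c‖·‖²` to `u` and to `-u` gives continuous convex functions, whose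
Hahn–Banach subgradients at `x` squeeze `u` between two paraboloids with opening `c`. Their
linear parts must coincide, which yields `|u (x + y) - u x - ⟪l x, y⟫| ≤ c‖y‖²`: this is
Fréchet differentiability with `∇u x = l x`, and comparing the estimates at `a` and `b` along a
suitable `y` gives `‖l a - l b‖ ≤ 6c‖a - b‖`.
-/

section Subgradient

variable {E : Type*} [TopologicalSpace E] [AddCommGroup E] [IsTopologicalAddGroup E]
  [Module ℝ E] [ContinuousSMul ℝ E]

theorem ConvexOn.exists_subgradient {f : E → ℝ} (hf : ConvexOn ℝ Set.univ f)
    (hcont : Continuous f) (x : E) :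
    ∃ g : StrongDual ℝ E, ∀ y, f x + g (y - x) ≤ f y := by
  have hopen : IsOpen {p : E × ℝ | p.1 ∈ Set.univ ∧ f p.1 < p.2} := by
    simpa using isOpen_lt (hcont.comp continuous_fst) continuous_snd
  obtain ⟨φ, hφ⟩ := geometric_hahn_banach_open_point hf.convex_strict_epigraph hopen
    (x := (x, f x)) (by simp)
  have hsplit (y : E) (t : ℝ) : φ (y, t) = φ (y, 0) + t * φ (0, 1) := by
    rw [show ((y, t) : E × ℝ) = (y, 0) + t • ((0 : E), (1 : ℝ)) by simp, map_add, map_smul,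
      smul_eq_mul]
  have hsep : ∀ y t, f y < t → φ (y, 0) + t * φ (0, 1) < φ (x, 0) + f x * φ (0, 1) :=
    fun y t hyt => by
      have := hφ (y, t) ⟨Set.mem_univ y, hyt⟩
      rwa [hsplit y t, hsplit x (f x)] at this
  have hneg : φ (0, 1) < 0 := by linarith [hsep x (f x + 1) (by linarith)]
  refine ⟨(-φ (0, 1))⁻¹ • φ.comp (ContinuousLinearMap.inl ℝ E ℝ), fun y => ?_⟩
  refine le_of_forall_gt_imp_ge_of_dense fun t ht => le_of_lt ?_
  have hφyx : φ (y - x, 0) = φ (y, 0) - φ (x, 0) := by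
    rw [← map_sub, Prod.mk_sub_mk, sub_zero]
  have hlt : φ (y - x, 0) < (t - f x) * -φ (0, 1) := by linarith [hsep y t ht]
  have hpos : 0 < -φ (0, 1) := neg_pos.2 hneg
  have hslope : (-φ (0, 1))⁻¹ * φ (y - x, 0) < t - f x := by
    rw [inv_mul_lt_iff₀ hpos]
    linarith
  simp only [smul_apply, ContinuousLinearMap.comp_apply,
    ContinuousLinearMap.inl_apply, smul_eq_mul]
  linarith

end Subgradient

section InnerProductSpace

variable {H : Type*} [NormedAddCommGroup H] [InnerProductSpace ℝ H]

theorem ConvexOn.exists_inner_subgradient [CompleteSpace H] {f : H → ℝ}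
    (hf : ConvexOn ℝ Set.univ f) (hcont : Continuous f) (x : H) :
    ∃ n : H, ∀ y, f x + ⟪n, y - x⟫ ≤ f y := by
  obtain ⟨g, hg⟩ := hf.exists_subgradient hcont x
  exact ⟨(InnerProductSpace.toDual ℝ H).symm g, fun y => by simpa using hg y⟩

theorem eq_zero_of_forall_inner_le_mul_norm_sq {w : H} {c : ℝ}
    (h : ∀ y, ⟪w, y⟫ ≤ c * ‖y‖ ^ 2) : w = 0 := by
  set t : ℝ := (|c| + 1)⁻¹
  have ht : 0 < t := by positivity
  have hct : c * t < 1 :=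
    calc c * t ≤ |c| * t := by gcongr; exact le_abs_self c
      _ < (|c| + 1) * t := by gcongr; linarith
      _ = 1 := mul_inv_cancel₀ (by positivity)
  have hw := h (t • w)
  rw [real_inner_smul_right, real_inner_self_eq_norm_sq, norm_smul, Real.norm_of_nonneg ht.le,
    mul_pow] at hw
  have hsq : ‖w‖ ^ 2 ≤ 0 := by nlinarith [mul_pos (sub_pos.2 hct) ht]
  exact norm_eq_zero.1 (pow_eq_zero_iff two_ne_zero |>.1 (le_antisymm hsq (sq_nonneg _)))

theorem eq_of_inner_sub_le_of_le_inner_add {g : H → ℝ} {l l' : H} {c : ℝ}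
    (hlow : ∀ y, ⟪l, y⟫ - c * ‖y‖ ^ 2 ≤ g y) (hup : ∀ y, g y ≤ ⟪l', y⟫ + c * ‖y‖ ^ 2) :
    l = l' := by
  rw [← sub_eq_zero]
  refine eq_zero_of_forall_inner_le_mul_norm_sq (c := 2 * c) fun y => ?_
  rw [inner_sub_left]
  linarith [hlow y, hup y]

theorem exists_abs_sub_inner_le_of_concaveOn_sub_of_convexOn_add [CompleteSpace H] {u : H → ℝ}
    (hu : Continuous u) {c : ℝ} (hconc : ConcaveOn ℝ Set.univ fun x => u x - c * ‖x‖ ^ 2)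
    (hconv : ConvexOn ℝ Set.univ fun x => u x + c * ‖x‖ ^ 2) (x : H) :
    ∃ l : H, ∀ y, |u (x + y) - u x - ⟪l, y⟫| ≤ c * ‖y‖ ^ 2 := by
  have hq : Continuous fun z : H => c * ‖z‖ ^ 2 := by fun_prop
  obtain ⟨n, hn⟩ := hconv.exists_inner_subgradient (hu.add hq) x
  obtain ⟨m, hm⟩ := hconc.neg.exists_inner_subgradient (hu.sub hq).neg x
  have hsq (y : H) : c * ‖x + y‖ ^ 2 = c * ‖x‖ ^ 2 + ⟪(2 * c) • x, y⟫ + c * ‖y‖ ^ 2 := by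
    rw [norm_add_sq_real, real_inner_smul_left]
    ring
  have hlow (y : H) : ⟪n - (2 * c) • x, y⟫ - c * ‖y‖ ^ 2 ≤ u (x + y) - u x := by
    have := hn (x + y)
    rw [add_sub_cancel_left] at this
    rw [inner_sub_left]
    linarith [hsq y]
  have hup (y : H) : u (x + y) - u x ≤ ⟪(2 * c) • x - m, y⟫ + c * ‖y‖ ^ 2 := by
    have := hm (x + y)
    simp only [Pi.neg_apply, add_sub_cancel_left] at this
    rw [inner_sub_left]
    linarith [hsq y]
  have hll' := eq_of_inner_sub_le_of_le_inner_add hlow hup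
  refine ⟨n - (2 * c) • x, fun y => abs_le.2 ⟨?_, ?_⟩⟩
  · linarith [hlow y]
  · rw [hll']
    linarith [hup y]

theorem hasGradientAt_of_abs_sub_inner_le [CompleteSpace H] {u : H → ℝ} {l x : H} {c : ℝ}
    (h : ∀ y, |u (x + y) - u x - ⟪l, y⟫| ≤ c * ‖y‖ ^ 2) : HasGradientAt u l x := by
  rw [hasGradientAt_iff_hasFDerivAt, hasFDerivAt_iff_isLittleO_nhds_zero]
  refine (Asymptotics.IsBigO.of_bound c (Filter.Eventually.of_forall fun y => ?_)).trans_isLittleO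
    (Asymptotics.isLittleO_norm_pow_id one_lt_two)
  simpa using h y

theorem exists_norm_le_inner_eq_norm_mul (w : H) {r : ℝ} (hr : 0 ≤ r) :
    ∃ y : H, ‖y‖ ≤ r ∧ ⟪w, y⟫ = ‖w‖ * r := by
  rcases eq_or_ne w 0 with rfl | hw
  · exact ⟨0, by simpa using hr, by simp⟩
  have hw' : ‖w‖ ≠ 0 := norm_ne_zero_iff.2 hw
  refine ⟨(r / ‖w‖) • w, ?_, ?_⟩
  · rw [norm_smul, Real.norm_of_nonneg (by positivity), div_mul_cancel₀ r hw']
  · rw [real_inner_smul_right, real_inner_self_eq_norm_sq]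
    field_simp

theorem norm_sub_le_of_abs_sub_inner_le {u : H → ℝ} {l : H → H} {c : ℝ}
    (h : ∀ x y, |u (x + y) - u x - ⟪l x, y⟫| ≤ c * ‖y‖ ^ 2) (a b : H) :
    ‖l a - l b‖ ≤ 6 * c * ‖a - b‖ := by
  set v := b - a with hv
  rcases eq_or_ne v 0 with hv0 | hv0
  · simp [← sub_eq_zero.1 hv0]
  have hvpos : 0 < ‖v‖ := norm_pos_iff.2 hv0
  have hc : 0 ≤ c := nonneg_of_mul_nonneg_left ((abs_nonneg _).trans (h a v)) (by positivity)
  obtain ⟨y, hy, hy_inner⟩ := exists_norm_le_inner_eq_norm_mul (l a - l b) hvpos.le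
  have hcmp : ⟪l a - l b, y⟫ ≤ c * (‖v + y‖ ^ 2 + ‖v‖ ^ 2 + ‖y‖ ^ 2) := by
    have h₁ := abs_le.1 (h a (v + y))
    have h₂ := abs_le.1 (h a v)
    have h₃ := abs_le.1 (h b y)
    rw [show a + (v + y) = b + y by rw [hv]; abel, inner_add_right] at h₁
    rw [show a + v = b by rw [hv]; abel] at h₂
    rw [inner_sub_left]
    linarith [h₁.1, h₂.2, h₃.2]
  have hvy : ‖v + y‖ ≤ 2 * ‖v‖ := (norm_add_le v y).trans (by linarith)
  have hmul : ‖l a - l b‖ * ‖v‖ ≤ 6 * c * ‖a - b‖ * ‖v‖ := by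
    rw [norm_sub_rev a b]
    calc ‖l a - l b‖ * ‖v‖ = ⟪l a - l b, y⟫ := hy_inner.symm
      _ ≤ c * (‖v + y‖ ^ 2 + ‖v‖ ^ 2 + ‖y‖ ^ 2) := hcmp
      _ ≤ c * ((2 * ‖v‖) ^ 2 + ‖v‖ ^ 2 + ‖v‖ ^ 2) := by gcongr
      _ = 6 * c * ‖v‖ * ‖v‖ := by ring
  exact le_of_mul_le_mul_right hmul hvpos

theorem lipschitzWith_of_abs_sub_inner_le {u : H → ℝ} {l : H → H} {c : ℝ}
    (h : ∀ x y, |u (x + y) - u x - ⟪l x, y⟫| ≤ c * ‖y‖ ^ 2) :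
    LipschitzWith (Real.toNNReal (6 * c)) l :=
  LipschitzWith.of_dist_le' fun a b => by
    simpa only [dist_eq_norm] using norm_sub_le_of_abs_sub_inner_le h a b

end InnerProductSpace

theorem semiconcave_semiconvex_C11_general {H : Type*} [NormedAddCommGroup H]
    [InnerProductSpace ℝ H] [CompleteSpace H]
    (u : H → ℝ) (hu_cont : Continuous u) (k : ℝ)
    (hconc : ConcaveOn ℝ Set.univ (fun x : H => u x - ‖x‖ ^ 2 / k))
    (hconv : ConvexOn ℝ Set.univ (fun x : H => u x + ‖x‖ ^ 2 / k)) :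
    Differentiable ℝ u ∧
      LipschitzWith (Real.toNNReal (6 / k)) (fun x => gradient u x) ∧
      (∀ x : H, ∃! l : H, ∀ y : H, |u (x + y) - u x - ⟪l, y⟫| ≤ ‖y‖ ^ 2 / k) := by
  simp only [div_eq_inv_mul] at hconc hconv ⊢
  choose l hl using exists_abs_sub_inner_le_of_concaveOn_sub_of_convexOn_add hu_cont hconc hconv
  have hgrad (x : H) : HasGradientAt u (l x) x := hasGradientAt_of_abs_sub_inner_le (hl x)
  have hgrad_eq : (fun x => gradient u x) = l := funext fun x => (hgrad x).gradient
  refine ⟨fun x => (hgrad x).differentiableAt, ?_, fun x => ⟨l x, hl x, fun l' hl' => ?_⟩⟩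
  · rw [hgrad_eq, mul_comm]
    exact lipschitzWith_of_abs_sub_inner_le hl
  · exact eq_of_inner_sub_le_of_le_inner_add (g := fun y => u (x + y) - u x) (c := k⁻¹)
      (fun y => by linarith [abs_le.1 (hl' y)]) (fun y => by linarith [abs_le.1 (hl x y)])

theorem semiconcave_semiconvex_C11 {H : Type*} [NormedAddCommGroup H]
    [InnerProductSpace ℝ H] [CompleteSpace H]
    (u : H → ℝ) (hu_cont : Continuous u) (k : ℝ) (hk : 0 < k)
    (hconc : ConcaveOn ℝ Set.univ (fun x : H => u x - ‖x‖ ^ 2 / k))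
    (hconv : ConvexOn ℝ Set.univ (fun x : H => u x + ‖x‖ ^ 2 / k)) :
    Differentiable ℝ u ∧
      LipschitzWith (Real.toNNReal (6 / k)) (fun x => gradient u x) ∧
      (∀ x : H, ∃! l : H, ∀ y : H, |u (x + y) - u x - ⟪l, y⟫| ≤ ‖y‖ ^ 2 / k) :=
  semiconcave_semiconvex_C11_general u hu_cont k hconc hconv
end

section
/- Suppose for each x ∈ H there exists l_x ∈ H such that |u(x+y) - u(x) - ⟪l_x, y⟫| ≤ ‖y‖²/k for all y ∈ H, with k > 0. Then ‖l_{x+y} - l_x‖ ≤ 6‖y‖/k for all x, y ∈ H. -/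
/-!
Expanding `u` around `x` with steps `y` and `y + z`, and around `x + y` with step `z`, the
values of `u` cancel and leave `⟪l (x + y) - l x, z⟫ ≤ (‖z‖² + ‖y + z‖² + ‖y‖²) / k`.
For `‖z‖ ≤ ‖y‖` the right side is at most `6 ‖y‖² / k`, and taking `z` along
`l (x + y) - l x` with `‖z‖ = ‖y‖` turns the left side into `‖y‖ ‖l (x + y) - l x‖`.
-/

open scoped RealInnerProductSpace

section

variable {E : Type*} [NormedAddCommGroup E] [InnerProductSpace ℝ E]

theorem mul_norm_le_of_forall_norm_le_inner_le {d : E} {r M : ℝ} (hr : 0 ≤ r)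
    (h : ∀ z : E, ‖z‖ ≤ r → ⟪d, z⟫ ≤ M) : r * ‖d‖ ≤ M := by
  rcases eq_or_ne d 0 with rfl | hd
  · simpa using h 0 (by simpa using hr)
  have hd' : ‖d‖ ≠ 0 := norm_ne_zero_iff.mpr hd
  have hz : ‖(r / ‖d‖) • d‖ = r := by
    rw [norm_smul, Real.norm_eq_abs, abs_of_nonneg (by positivity), div_mul_cancel₀ _ hd']
  calc r * ‖d‖ = ⟪d, (r / ‖d‖) • d⟫ := by
        rw [real_inner_smul_right, real_inner_self_eq_norm_sq]
        field_simp
    _ ≤ M := h _ hz.le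

theorem inner_sub_le_of_abs_sub_inner_le {u : E → ℝ} {l : E → E} {C : ℝ}
    (hl : ∀ x y : E, |u (x + y) - u x - ⟪l x, y⟫| ≤ C * ‖y‖ ^ 2) (x y z : E) :
    ⟪l (x + y) - l x, z⟫ ≤ C * (‖z‖ ^ 2 + ‖y + z‖ ^ 2 + ‖y‖ ^ 2) := by
  have hxy := abs_le.mp (hl x y)
  have hxyz := abs_le.mp (hl x (y + z))
  have hyz := abs_le.mp (hl (x + y) z)
  rw [← add_assoc, inner_add_right] at hxyz
  rw [inner_sub_left]
  linarith [hxy.1, hxyz.2, hyz.2]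

theorem norm_sub_le_of_abs_sub_inner_le_s16 {u : E → ℝ} {l : E → E} {C : ℝ}
    (hl : ∀ x y : E, |u (x + y) - u x - ⟪l x, y⟫| ≤ C * ‖y‖ ^ 2) (x y : E) :
    ‖l (x + y) - l x‖ ≤ 6 * C * ‖y‖ := by
  rcases eq_or_ne y 0 with rfl | hy
  · simp
  have hy' : 0 < ‖y‖ := norm_pos_iff.mpr hy
  have hC : 0 ≤ C := nonneg_of_mul_nonneg_left ((abs_nonneg _).trans (hl x y)) (by positivity)
  have hbound : ‖y‖ * ‖l (x + y) - l x‖ ≤ ‖y‖ * (6 * C * ‖y‖) := by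
    refine mul_norm_le_of_forall_norm_le_inner_le hy'.le fun z hz => ?_
    have hyz : ‖y + z‖ ≤ 2 * ‖y‖ := by linarith [norm_add_le y z]
    calc ⟪l (x + y) - l x, z⟫ ≤ C * (‖z‖ ^ 2 + ‖y + z‖ ^ 2 + ‖y‖ ^ 2) :=
          inner_sub_le_of_abs_sub_inner_le hl x y z
      _ ≤ C * (‖y‖ ^ 2 + (2 * ‖y‖) ^ 2 + ‖y‖ ^ 2) := by gcongr
      _ = ‖y‖ * (6 * C * ‖y‖) := by ring
  exact le_of_mul_le_mul_left hbound hy'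

end

theorem sub_differential_lipschitz_general {H : Type*} [NormedAddCommGroup H]
    [InnerProductSpace ℝ H]
    (u : H → ℝ) (k : ℝ) (l : H → H)
    (hl : ∀ x y : H, |u (x + y) - u x - ⟪l x, y⟫| ≤ ‖y‖ ^ 2 / k) :
    ∀ x y : H, ‖l (x + y) - l x‖ ≤ 6 * ‖y‖ / k := by
  intro x y
  have hl' : ∀ x y : H, |u (x + y) - u x - ⟪l x, y⟫| ≤ k⁻¹ * ‖y‖ ^ 2 := by
    simpa only [inv_mul_eq_div] using hl
  calc ‖l (x + y) - l x‖ ≤ 6 * k⁻¹ * ‖y‖ := norm_sub_le_of_abs_sub_inner_le_s16 hl' x y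
    _ = 6 * ‖y‖ / k := by ring

theorem sub_differential_lipschitz {H : Type*} [NormedAddCommGroup H]
    [InnerProductSpace ℝ H]
    (u : H → ℝ) (k : ℝ) (hk : 0 < k) (l : H → H)
    (hl : ∀ x y : H, |u (x + y) - u x - ⟪l x, y⟫| ≤ ‖y‖ ^ 2 / k) :
    ∀ x y : H, ‖l (x + y) - l x‖ ≤ 6 * ‖y‖ / k :=
  sub_differential_lipschitz_general u k l hl
end

section
/- Let u : Bⁿ → ℝ be a bounded function on the open unit ball of ℝⁿ such that u - ‖·‖²/a is concave for some a > 0, and let g : Bⁿ → ℝ be a non-negative C² function with compact support contained in Bⁿ. Then the product gu, extended by zero outside Bⁿ, is semi-concave on ℝⁿ, i.e., there exists C > 0 such that x ↦ g(x)u(x) - C‖x‖² is concave on ℝⁿ. -/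
/-
Write `u = w + ‖·‖²/a` with `w` concave and bounded on the ball, hence Lipschitz on every smaller
ball. As `g` vanishes off the ball, the extended product is `g u = g w + g ‖·‖²/a` on all of `ℝⁿ`,
and the second summand is `C²` with compact support. For the first one,
`Δₕ²(g w)(x) = g(x) Δₕ²w(x) + (g(x+h) - g(x)) (w(x+h) - w(x-h)) + Δₕ²g(x) w(x-h)`:
the first term is nonpositive by concavity and the others are `O(‖h‖²)` while `x ± h` stay in a
ball where `w` is Lipschitz; otherwise `g` vanishes at all three points, and for large `h`
boundedness suffices. Finally, a continuous `f` with `Δₕ²f ≤ 2C‖h‖²` makes `f - C‖·‖²`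
midpoint concave, hence concave.
-/

open Set Metric
open scoped NNReal

def secondDiff {E : Type*} [AddGroup E] (f : E → ℝ) (x h : E) : ℝ :=
  f (x + h) + f (x - h) - 2 * f x

section SecondDiff

variable {E : Type*} [AddCommGroup E]

lemma secondDiff_add (f g : E → ℝ) (x h : E) :
    secondDiff (f + g) x h = secondDiff f x h + secondDiff g x h := by
  simp only [secondDiff, Pi.add_apply]; ring

lemma secondDiff_mul (g w : E → ℝ) (x h : E) :
    secondDiff (g * w) x h = g x * secondDiff w x h
      + (g (x + h) - g x) * (w (x + h) - w (x - h)) + secondDiff g x h * w (x - h) := by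
  simp only [secondDiff, Pi.mul_apply]; ring

lemma ConcaveOn.secondDiff_nonpos [Module ℝ E] {s : Set E} {w : E → ℝ} (hw : ConcaveOn ℝ s w)
    {x h : E} (hp : x + h ∈ s) (hm : x - h ∈ s) : secondDiff w x h ≤ 0 := by
  have hmid := hw.2 hp hm (by norm_num : (0 : ℝ) ≤ 2⁻¹) (by norm_num : (0 : ℝ) ≤ 2⁻¹)
    (by norm_num)
  rw [show (2⁻¹ : ℝ) • (x + h) + (2⁻¹ : ℝ) • (x - h) = x by module] at hmid
  simp only [smul_eq_mul] at hmid
  unfold secondDiff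
  linarith

end SecondDiff

lemma nonpos_of_midpoint_convex {φ : ℝ → ℝ} (hφ : Continuous φ) (h₀ : φ 0 ≤ 0) (h₁ : φ 1 ≤ 0)
    (hmid : ∀ t s, 2 * φ t ≤ φ (t + s) + φ (t - s)) {t : ℝ} (ht : t ∈ Icc 0 1) : φ t ≤ 0 := by
  by_contra! hpos
  obtain ⟨t₀, ht₀, hmax⟩ :=
    isCompact_Icc.exists_isMaxOn (nonempty_Icc.2 zero_le_one) hφ.continuousOn
  have hm : 0 < φ t₀ := hpos.trans_le (hmax ht)
  -- the leftmost maximiser cannot satisfy the midpoint inequality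
  obtain ⟨r, ⟨hr, hrm : φ r = φ t₀⟩, hleast⟩ := (isCompact_Icc.inter_right
    (isClosed_eq hφ continuous_const)).exists_isLeast ⟨t₀, ht₀, rfl⟩
  have hr₀ : 0 < r := lt_of_le_of_ne hr.1 (by rintro rfl; linarith)
  have hr₁ : r < 1 := lt_of_le_of_ne hr.2 (by rintro rfl; linarith)
  set d := min r (1 - r)
  have hd : 0 < d := lt_min hr₀ (by linarith)
  have hleft : r - d ∈ Icc (0 : ℝ) 1 := ⟨by linarith [min_le_left r (1 - r)], by linarith⟩
  have hright : r + d ∈ Icc (0 : ℝ) 1 := ⟨by linarith, by linarith [min_le_right r (1 - r)]⟩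
  have hlt : φ (r - d) < φ t₀ :=
    (hmax hleft).lt_of_ne fun h => by linarith [hleast ⟨hleft, h⟩]
  have hle : φ (r + d) ≤ φ t₀ := hmax hright
  have := hmid r d
  linarith

theorem concaveOn_univ_of_secondDiff_nonpos {E : Type*} [AddCommGroup E] [Module ℝ E]
    [TopologicalSpace E] [ContinuousAdd E] [ContinuousSMul ℝ E] {f : E → ℝ} (hf : Continuous f)
    (hf₂ : ∀ x h, secondDiff f x h ≤ 0) : ConcaveOn ℝ univ f := by
  refine ⟨convex_univ, fun x _ y _ a b ha hb hab => ?_⟩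
  let φ : ℝ → ℝ := fun t => t * f x + (1 - t) * f y - f (t • x + (1 - t) • y)
  have hmid : ∀ t s, 2 * φ t ≤ φ (t + s) + φ (t - s) := by
    intro t s
    have := hf₂ (t • x + (1 - t) • y) (s • (x - y))
    rw [secondDiff, show t • x + (1 - t) • y + s • (x - y) = (t + s) • x + (1 - (t + s)) • y by
      module, show t • x + (1 - t) • y - s • (x - y) = (t - s) • x + (1 - (t - s)) • y by
      module] at this
    simp only [φ]
    linarith
  have := nonpos_of_midpoint_convex (by fun_prop) (by simp [φ]) (by simp [φ]) hmid
    ⟨ha, by linarith⟩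
  obtain rfl : b = 1 - a := by linarith
  simp only [φ, smul_eq_mul] at this ⊢
  linarith

theorem concaveOn_univ_sub_mul_norm_sq {E : Type*} [NormedAddCommGroup E] [InnerProductSpace ℝ E]
    {f : E → ℝ} {C : ℝ} (hf : Continuous f) (hf₂ : ∀ x h, secondDiff f x h ≤ 2 * C * ‖h‖ ^ 2) :
    ConcaveOn ℝ univ fun x => f x - C * ‖x‖ ^ 2 := by
  refine concaveOn_univ_of_secondDiff_nonpos (by fun_prop) fun x h => ?_
  have := hf₂ x h
  dsimp only [secondDiff] at this ⊢
  rw [norm_add_sq_real, norm_sub_sq_real]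
  linear_combination this

section Taylor

variable {E : Type*} [NormedAddCommGroup E] [NormedSpace ℝ E] {g : E → ℝ} {L : ℝ≥0}

lemma abs_sub_sub_fderiv_le_of_lipschitzWith_fderiv (hg : Differentiable ℝ g)
    (hL : LipschitzWith L (fderiv ℝ g)) (x h : E) :
    |g (x + h) - g x - fderiv ℝ g x h| ≤ L * ‖h‖ ^ 2 := by
  have hbound : ∀ z ∈ closedBall x ‖h‖, ‖fderiv ℝ g z - fderiv ℝ g x‖ ≤ L * ‖h‖ := fun z hz => by
    rw [← dist_eq_norm]
    exact (hL.dist_le_mul z x).trans (by gcongr; exact hz)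
  have := (convex_closedBall x ‖h‖).norm_image_sub_le_of_norm_fderiv_le' (fun z _ => hg z) hbound
    (mem_closedBall_self (norm_nonneg h)) (mem_closedBall.2 (dist_self_add_left h x).le)
  rw [add_sub_cancel_left, Real.norm_eq_abs] at this
  linarith

lemma abs_secondDiff_le_of_lipschitzWith_fderiv (hg : Differentiable ℝ g)
    (hL : LipschitzWith L (fderiv ℝ g)) (x h : E) :
    |secondDiff g x h| ≤ 2 * L * ‖h‖ ^ 2 := by
  have hp := abs_sub_sub_fderiv_le_of_lipschitzWith_fderiv hg hL x h
  have hm := abs_sub_sub_fderiv_le_of_lipschitzWith_fderiv hg hL x (-h)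
  rw [← sub_eq_add_neg, map_neg, norm_neg] at hm
  rw [secondDiff, abs_le] at *
  constructor <;> linarith [hp.1, hp.2, hm.1, hm.2]

lemma ContDiff.exists_abs_secondDiff_le_of_hasCompactSupport (hg : ContDiff ℝ 2 g)
    (hgc : HasCompactSupport g) : ∃ M, 0 ≤ M ∧ ∀ x h, |secondDiff g x h| ≤ M * ‖h‖ ^ 2 := by
  obtain ⟨L, hL⟩ := ContDiff.lipschitzWith_of_hasCompactSupport (hgc.fderiv ℝ)
    (hg.fderiv_right (m := 1) le_rfl) one_ne_zero
  exact ⟨2 * L, by positivity,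
    abs_secondDiff_le_of_lipschitzWith_fderiv (hg.differentiable two_ne_zero) hL⟩

end Taylor

lemma secondDiff_le_of_abs_le_of_norm_lt {E : Type*} [SeminormedAddGroup E] {f : E → ℝ}
    {A C r : ℝ} (hA : ∀ x, |f x| ≤ A) (hr : 0 < r)
    (hloc : ∀ x h, ‖h‖ < r → secondDiff f x h ≤ C * ‖h‖ ^ 2) (x h : E) :
    secondDiff f x h ≤ max C (4 * A / r ^ 2) * ‖h‖ ^ 2 := by
  rcases lt_or_ge ‖h‖ r with hh | hh
  · exact (hloc x h hh).trans (by gcongr; exact le_max_left _ _)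
  · have hA₀ : 0 ≤ A := (abs_nonneg _).trans (hA x)
    calc secondDiff f x h ≤ 4 * A := by
          have := hA x; have := hA (x + h); have := hA (x - h)
          rw [secondDiff]; rw [abs_le] at *; linarith
      _ = 4 * A / r ^ 2 * r ^ 2 := by field_simp
      _ ≤ max C (4 * A / r ^ 2) * ‖h‖ ^ 2 := by gcongr; exact le_max_right _ _

lemma continuous_mul_of_tsupport_subset {X : Type*} [TopologicalSpace X] {g u : X → ℝ}
    {U : Set X} (hU : IsOpen U) (hg : Continuous g) (hu : ContinuousOn u U)
    (hgU : tsupport g ⊆ U) : Continuous (g * u) :=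
  continuous_of_tsupport fun _ hx => hg.continuousAt.mul <|
    hu.continuousAt (hU.mem_nhds (hgU (tsupport_mul_subset_left hx)))

section Product

variable {E : Type*} [NormedAddCommGroup E] [NormedSpace ℝ E]

lemma secondDiff_mul_le {S : Set E} {g w : E → ℝ} {Lg Lw : ℝ≥0} {M A : ℝ} {x h : E}
    (hw : ConcaveOn ℝ S w) (hwA : ∀ y ∈ S, |w y| ≤ A) (hwL : LipschitzOnWith Lw w S)
    (hgL : LipschitzWith Lg g) (hg₀ : 0 ≤ g x) (hgM : |secondDiff g x h| ≤ M * ‖h‖ ^ 2)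
    (hp : x + h ∈ S) (hm : x - h ∈ S) :
    secondDiff (g * w) x h ≤ (2 * Lg * Lw + M * A) * ‖h‖ ^ 2 := by
  have hconc : g x * secondDiff w x h ≤ 0 :=
    mul_nonpos_of_nonneg_of_nonpos hg₀ (hw.secondDiff_nonpos hp hm)
  have hg₁ : |g (x + h) - g x| ≤ Lg * ‖h‖ := by
    rw [← Real.dist_eq, ← dist_self_add_left h x]; exact hgL.dist_le_mul _ _
  have hw₁ : |w (x + h) - w (x - h)| ≤ Lw * (2 * ‖h‖) := by
    have : dist (x + h) (x - h) ≤ 2 * ‖h‖ :=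
      calc dist (x + h) (x - h) ≤ dist (x + h) x + dist x (x - h) := dist_triangle _ _ _
        _ = 2 * ‖h‖ := by rw [dist_self_add_left, dist_comm, dist_self_sub_left]; ring
    rw [← Real.dist_eq]
    exact (hwL.dist_le_mul _ hp _ hm).trans (by gcongr)
  have hcross : (g (x + h) - g x) * (w (x + h) - w (x - h)) ≤ 2 * Lg * Lw * ‖h‖ ^ 2 :=
    calc _ ≤ |g (x + h) - g x| * |w (x + h) - w (x - h)| := by rw [← abs_mul]; exact le_abs_self _
      _ ≤ (Lg * ‖h‖) * (Lw * (2 * ‖h‖)) := by gcongr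
      _ = 2 * Lg * Lw * ‖h‖ ^ 2 := by ring
  have hcurv : secondDiff g x h * w (x - h) ≤ M * A * ‖h‖ ^ 2 :=
    calc _ ≤ |secondDiff g x h| * |w (x - h)| := by rw [← abs_mul]; exact le_abs_self _
      _ ≤ (M * ‖h‖ ^ 2) * A := by
          gcongr
          · exact (abs_nonneg _).trans hgM
          · exact hwA _ hm
      _ = M * A * ‖h‖ ^ 2 := by ring
  rw [secondDiff_mul]
  linarith

theorem exists_secondDiff_mul_le [ProperSpace E] {x₀ : E} {R A : ℝ} {g w : E → ℝ}
    (hw : ConcaveOn ℝ (ball x₀ R) w) (hwA : ∀ y ∈ ball x₀ R, |w y| ≤ A) (hg : ContDiff ℝ 2 g)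
    (hg₀ : ∀ x, 0 ≤ g x) (hgR : tsupport g ⊆ ball x₀ R) (hgc : HasCompactSupport g) :
    ∃ C, ∀ x h, secondDiff (g * w) x h ≤ C * ‖h‖ ^ 2 := by
  replace hwA : ∀ y ∈ ball x₀ R, |w y| ≤ |A| := fun y hy => (hwA y hy).trans (le_abs_self A)
  obtain ⟨ρ, hρR, hgρ⟩ := exists_lt_subset_ball (isClosed_tsupport g) hgR
  set δ := (R - ρ) / 3
  have hδ : 0 < δ := by simp only [δ]; linarith
  have hwL := hw.lipschitzOnWith_of_abs_le hδ hwA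
  obtain ⟨Lg, hgL⟩ := ContDiff.lipschitzWith_of_hasCompactSupport hgc hg two_ne_zero
  obtain ⟨M, hM₀, hM⟩ := hg.exists_abs_secondDiff_le_of_hasCompactSupport hgc
  obtain ⟨G, hG⟩ := hgc.exists_bound_of_continuous hg.continuous
  have hG₀ : 0 ≤ G := (norm_nonneg _).trans (hG x₀)
  have hgw : ∀ x, |(g * w) x| ≤ G * |A| := by
    intro x
    by_cases hx : x ∈ ball x₀ R
    · rw [Pi.mul_apply, abs_mul]
      exact mul_le_mul (hG x) (hwA x hx) (abs_nonneg _) hG₀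
    · simp [image_eq_zero_of_notMem_tsupport fun h => hx (hgR h)]
      positivity
  refine ⟨_, secondDiff_le_of_abs_le_of_norm_lt (C := 2 * Lg * (2 * |A| / δ).toNNReal + M * |A|)
    hgw hδ fun x h hh => ?_⟩
  by_cases hx : x ∈ ball x₀ (ρ + δ)
  · -- near the support of `g`, all three points lie where `w` is Lipschitz
    have hsub : ball x δ ⊆ ball x₀ (R - δ) :=
      ball_subset_ball' (by rw [mem_ball] at hx; simp only [δ] at hx ⊢; linarith)
    exact secondDiff_mul_le (hw.subset (ball_subset_ball (by linarith)) (convex_ball _ _))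
      (fun y hy => hwA y (ball_subset_ball (by linarith) hy)) hwL hgL (hg₀ x) (hM x h)
      (hsub (by rwa [mem_ball, dist_self_add_left])) (hsub (by rwa [mem_ball, dist_self_sub_left]))
  · have hzero : ∀ y ∈ ball x δ, g y = 0 := fun y hy =>
      image_eq_zero_of_notMem_tsupport fun hy' => hx <|
        ball_subset_ball' (by linarith [mem_ball.1 (hgρ hy')]) (mem_ball_comm.1 hy)
    rw [secondDiff, Pi.mul_apply, Pi.mul_apply, Pi.mul_apply, hzero x (mem_ball_self hδ),
      hzero _ (by rwa [mem_ball, dist_self_add_left]),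
      hzero _ (by rwa [mem_ball, dist_self_sub_left])]
    simp only [zero_mul, add_zero, mul_zero, sub_zero]
    positivity

end Product

theorem product_semiconcave (n : ℕ)
    (u : EuclideanSpace ℝ (Fin n) → ℝ)
    (hu_bdd : ∃ C : ℝ, ∀ x ∈ Metric.ball (0 : EuclideanSpace ℝ (Fin n)) 1, |u x| ≤ C)
    (a : ℝ) (ha : 0 < a)
    (hu_sc : ConcaveOn ℝ (Metric.ball (0 : EuclideanSpace ℝ (Fin n)) 1)
      (fun x => u x - ‖x‖ ^ 2 / a))
    (g : EuclideanSpace ℝ (Fin n) → ℝ)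
    (hg_smooth : ContDiff ℝ 2 g)
    (hg_nonneg : ∀ x, 0 ≤ g x)
    (hg_supp : tsupport g ⊆ Metric.ball (0 : EuclideanSpace ℝ (Fin n)) 1)
    (hg_cpt : HasCompactSupport g) :
    ∃ C : ℝ, 0 < C ∧ ConcaveOn ℝ Set.univ
      (fun x : EuclideanSpace ℝ (Fin n) =>
        (Metric.ball (0 : EuclideanSpace ℝ (Fin n)) 1).indicator
          (fun y => g y * u y) x - C * ‖x‖ ^ 2) := by
  obtain ⟨Cu, hCu⟩ := hu_bdd
  have hw_bdd : ∀ x ∈ ball (0 : EuclideanSpace ℝ (Fin n)) 1, |u x - ‖x‖ ^ 2 / a| ≤ Cu + 1 / a := by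
    intro x hx
    have hx₁ : ‖x‖ ^ 2 ≤ 1 := pow_le_one₀ (norm_nonneg x) (mem_ball_zero_iff.1 hx).le
    calc |u x - ‖x‖ ^ 2 / a| ≤ |u x| + |‖x‖ ^ 2 / a| := abs_sub _ _
      _ ≤ Cu + 1 / a := by
          rw [abs_of_nonneg (by positivity : (0 : ℝ) ≤ ‖x‖ ^ 2 / a)]
          gcongr
          exact hCu x hx
  obtain ⟨C₁, hC₁⟩ :=
    exists_secondDiff_mul_le hu_sc hw_bdd hg_smooth hg_nonneg hg_supp hg_cpt
  obtain ⟨C₂, -, hC₂⟩ := (hg_smooth.mul ((contDiff_norm_sq ℝ).div_const a)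
    ).exists_abs_secondDiff_le_of_hasCompactSupport hg_cpt.mul_right
  have hsplit : g * u = g * (fun x => u x - ‖x‖ ^ 2 / a) + fun x => g x * (‖x‖ ^ 2 / a) := by
    ext x; simp only [Pi.add_apply, Pi.mul_apply]; ring
  have hu_cont : ContinuousOn u (ball 0 1) := by
    refine ((hu_sc.continuousOn isOpen_ball).add
      ((continuous_norm.pow 2).div_const a).continuousOn).congr fun x _ => ?_
    simp
  have hcont := continuous_mul_of_tsupport_subset isOpen_ball hg_smooth.continuous hu_cont hg_supp
  have hind : (ball 0 1).indicator (fun y => g y * u y) = g * u :=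
    indicator_eq_self.2 <|
      (Function.support_mul_subset_left g u).trans ((subset_tsupport g).trans hg_supp)
  refine ⟨max ((C₁ + C₂) / 2) 1, by positivity, ?_⟩
  rw [hind]
  refine concaveOn_univ_sub_mul_norm_sq hcont fun x h => ?_
  rw [hsplit, secondDiff_add]
  calc _ ≤ C₁ * ‖h‖ ^ 2 + C₂ * ‖h‖ ^ 2 := add_le_add (hC₁ x h) (le_of_abs_le (hC₂ x h))
    _ ≤ 2 * max ((C₁ + C₂) / 2) 1 * ‖h‖ ^ 2 := by
        rw [← add_mul]; gcongr; linarith [le_max_left ((C₁ + C₂) / 2) 1]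
end
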